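/- arXiv:1108.0338 — 3 statements merged into one kernel-verified Lean document; each statement's English description precedes it below -/
import Mathlib

section
/- Define the Eulerian-type polynomials A_n(q) ∈ ℤ[q] (for n ≥ 1) by the generating identity 1 + Σ_{n≥1} A_n(q) t^n/n! = (1 - Σ_{n≥1} (q-1)^{n-1} t^n/n!)^{-1} in ℚ(q)[[t]]. Then the A_n satisfy the recursion A_{n+1}(q) = Σ_{i=0}^{n} q^i + Σ_{i=0}^{n-2} C(n+1, n-i) · A_{i+1}(q) · (Σ_{k=1}^{n-i-1} q^k) for all n ≥ 1. -/
/-!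
Write `G = 1 + Σ A_n t^n/n!` and `F = (e^{(q-1)t} - 1)/(q - 1)`, so that `(1 - F) G = 1`.
Since `(1 - q)(1 - F) e^t = e^{qt} - q e^t`, multiplying by `(1 - q) e^t` gives
`(e^{qt} - q e^t) G = (1 - q) e^t`. Comparing coefficients of `t^{n+1}/(n+1)!` yields
`(q - 1) A_{n+1} = q^{n+1} - 1 + Σ C(n+1, j) (q^j - q) A_{n+1-j}`, and dividing by `q - 1`
turns both sides into geometric sums.
-/

open Finset PowerSeries

local notation "K" => RatFunc ℚ
local notation "q" => (RatFunc.X : RatFunc ℚ)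

section

variable {R : Type*} [Field R] [CharZero R]

def egf (a : ℕ → R) : R⟦X⟧ := mk fun n => a n / n.factorial

lemma egf_injective : Function.Injective (egf : (ℕ → R) → R⟦X⟧) := by
  intro a b h
  funext n
  have hn : (n.factorial : R) ≠ 0 := Nat.cast_ne_zero.2 n.factorial_ne_zero
  exact (div_left_inj' hn).1 (by simpa [egf] using congrArg (coeff n) h)

lemma egf_mul (a b : ℕ → R) :
    egf a * egf b = egf fun n => ∑ j ∈ range (n + 1), (n.choose j : R) * a j * b (n - j) := by
  ext n
  simp only [egf, coeff_mul, Nat.sum_antidiagonal_eq_sum_range_succ_mk, coeff_mk, sum_div]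
  refine sum_congr rfl fun j hj => ?_
  have hn : (n.factorial : R) ≠ 0 := Nat.cast_ne_zero.2 n.factorial_ne_zero
  rw [Nat.cast_choose R (Nat.lt_succ_iff.mp (mem_range.mp hj))]
  field_simp

lemma C_mul_exp (c : R) : C c * exp R = egf fun _ => c := by
  ext n
  simp [egf, coeff_exp, div_eq_mul_inv]

lemma rescale_exp_sub_C_mul_exp (z : R) :
    rescale z (exp R) - C z * exp R = egf fun n => z ^ n - z := by
  ext n
  simp [egf, coeff_exp, div_eq_mul_inv, sub_mul]

/-- The series `(e^{(z-1)t} - 1) / (z - 1)`, written so as to make sense also at `z = 1`. -/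
def expSubOneDiv (z : R) : R⟦X⟧ :=
  mk fun m => if m = 0 then 0 else (z - 1) ^ (m - 1) / m.factorial

lemma C_one_sub_mul_exp_mul_one_sub_expSubOneDiv (z : R) :
    C (1 - z) * exp R * (1 - expSubOneDiv z) = rescale z (exp R) - C z * exp R := by
  have hF : C (z - 1) * expSubOneDiv z = rescale (z - 1) (exp R) - 1 := by
    ext (_ | m) <;> rw [expSubOneDiv, coeff_C_mul, map_sub, coeff_rescale, coeff_exp, coeff_one]
    · simp
    · simp [pow_succ, div_eq_mul_inv, mul_assoc, mul_left_comm]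
  have hexp : exp R * rescale (z - 1) (exp R) = rescale z (exp R) := by
    simpa using exp_mul_exp_eq_exp_add (1 : R) (z - 1)
  simp only [map_sub, map_one] at hF ⊢
  linear_combination (exp R) * hF + hexp

lemma sum_choose_mul_pow_sub_mul_eq_one_sub {z : R} {A : ℕ → R}
    (hA : (1 - expSubOneDiv z) * mk (fun m => if m = 0 then 1 else A m / m.factorial) = 1)
    (N : ℕ) :
    ∑ j ∈ range (N + 1), (N.choose j : R) * (z ^ j - z) * (if N - j = 0 then 1 else A (N - j))
      = 1 - z := by
  have hG : (mk fun m => if m = 0 then 1 else A m / m.factorial) =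
      egf fun m => if m = 0 then 1 else A m := by
    ext (_ | m) <;> simp [egf]
  have h : (egf fun n => z ^ n - z) * (egf fun m => if m = 0 then 1 else A m) =
      egf fun _ => 1 - z := by
    rw [← rescale_exp_sub_C_mul_exp, ← C_one_sub_mul_exp_mul_one_sub_expSubOneDiv, ← hG,
      mul_assoc, hA, mul_one, C_mul_exp]
  rw [egf_mul] at h
  exact congrFun (egf_injective h) N

lemma sub_one_mul_eq_add_sum {z : R} {A : ℕ → R}
    (hA : (1 - expSubOneDiv z) * mk (fun m => if m = 0 then 1 else A m / m.factorial) = 1)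
    {n : ℕ} (hn : 1 ≤ n) :
    (z - 1) * A (n + 1) = z ^ (n + 1) - 1 +
      ∑ i ∈ range (n - 1), ((n + 1).choose (n - i) : R) * A (i + 1) * (z ^ (n - i) - z) := by
  obtain ⟨m, rfl⟩ : ∃ m, n = m + 1 := ⟨n - 1, by omega⟩
  have h := sum_choose_mul_pow_sub_mul_eq_one_sub hA (m + 2)
  rw [sum_range_succ, sum_range_succ', sum_range_succ', ← sum_range_reflect] at h
  have hmid : ∀ i ∈ range m,
      ((m + 2).choose (m - 1 - i + 1 + 1) : R) * (z ^ (m - 1 - i + 1 + 1) - z) *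
        (if m + 2 - (m - 1 - i + 1 + 1) = 0 then 1 else A (m + 2 - (m - 1 - i + 1 + 1))) =
      ((m + 2).choose (m + 1 - i) : R) * A (i + 1) * (z ^ (m + 1 - i) - z) := fun i hi => by
    have hi : i < m := mem_range.mp hi
    rw [show m - 1 - i + 1 + 1 = m + 1 - i by omega, show m + 2 - (m + 1 - i) = i + 1 by omega,
      if_neg i.succ_ne_zero]
    ring
  rw [sum_congr rfl hmid] at h
  simp only [zero_add, Nat.choose_one_right, Nat.cast_add, Nat.cast_ofNat, pow_one, sub_self,
    mul_zero, Nat.add_one_sub_one, Nat.add_eq_zero_iff, one_ne_zero, and_false, ↓reduceIte,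
    zero_mul, add_zero, Nat.choose_zero_right, Nat.cast_one, pow_zero, one_mul, tsub_zero,
    OfNat.ofNat_ne_zero, Nat.choose_self, tsub_self, mul_one] at h
  simp only [Nat.add_sub_cancel]
  linear_combination -h

theorem eulerian_recursion {z : R} (hz : z ≠ 1) {A : ℕ → R}
    (hA : (1 - expSubOneDiv z) * mk (fun m => if m = 0 then 1 else A m / m.factorial) = 1)
    {n : ℕ} (hn : 1 ≤ n) :
    A (n + 1) = (∑ i ∈ range (n + 1), z ^ i) +
      ∑ i ∈ range (n - 1), ((n + 1).choose (n - i) : R) * A (i + 1) *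
        ∑ k ∈ Icc 1 (n - i - 1), z ^ k := by
  refine mul_left_cancel₀ (sub_ne_zero.2 hz) ?_
  rw [sub_one_mul_eq_add_sum hA hn, mul_add, mul_geom_sum, mul_sum]
  congr 1
  refine sum_congr rfl fun i hi => ?_
  have hi : i < n - 1 := mem_range.mp hi
  rw [← Ico_add_one_right_eq_Icc, mul_left_comm, mul_comm (z - 1),
    geom_sum_Ico_mul z (by omega), pow_one, show n - i - 1 + 1 = n - i by omega]

end

/-- If `A_n ∈ ℚ(q)` are defined by the generating identity
`(1 - Σ_{n≥1} (q-1)^{n-1} t^n/n!) · (1 + Σ_{n≥1} A_n t^n/n!) = 1` in `ℚ(q)[[t]]`,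
then they satisfy Procesi's recursion
`A_{n+1} = Σ_{i=0}^{n} q^i + Σ_{i=0}^{n-2} C(n+1, n-i) A_{i+1} (Σ_{k=1}^{n-i-1} q^k)`. -/
theorem stmt2 (A : ℕ → K)
    (hA : (1 - PowerSeries.mk fun m =>
        if m = 0 then 0 else (q - 1) ^ (m - 1) / (m.factorial : K)) *
      (PowerSeries.mk fun m =>
        if m = 0 then 1 else A m / (m.factorial : K)) = 1) :
    ∀ n : ℕ, 1 ≤ n →
      A (n + 1) = (∑ i ∈ Finset.range (n + 1), q ^ i) +
        ∑ i ∈ Finset.range (n - 1), ((n + 1).choose (n - i) : K) * A (i + 1) *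
          ∑ k ∈ Finset.Icc 1 (n - i - 1), q ^ k := by
  have hX : q ≠ 1 := by
    rw [← RatFunc.algebraMap_X, ← map_one (algebraMap (Polynomial ℚ) K), ← Polynomial.C_1]
    exact (RatFunc.algebraMap_injective ℚ).ne (Polynomial.X_ne_C 1)
  intro n hn
  exact eulerian_recursion hX hA hn
end

section
/- For n ≥ 1, the one-row Hall–Littlewood symmetric polynomial P_{(n)}(y_1,…,y_k; q) := Σ_{w ∈ S_k/Stab} w( y_1^n ∏_{j=2}^{k} (y_1 - q y_j)/(y_1 - y_j) ) satisfies P_{(n)}(y; q) = Σ_{r=0}^{n-1} (-q)^r s_{(n-r,1^r)}(y), where s_{(n-r,1^r)} is the Schur polynomial of the hook partition (n-r, 1^r), as an identity of symmetric polynomials in k ≥ n variables. -/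
/-!
Expanding `∏_{j ≠ i} (y_i - q y_j) = ∑_r (-q)^r e_r(ŷ_i) y_i^(k-1-r)`, where `ŷ_i` is `y`
with `y_i` removed, turns `P_(n)` into
`∑_{r < k} (-q)^r ∑_i y_i^(n+k-1-r) e_r(ŷ_i) / ∏_{j ≠ i} (y_i - y_j)`.
Laplace expansion along the first column identifies the inner sum with the ratio of alternants
`a_(n+k-1-r, δ + 1^r) / a_δ`: the minor `a_(δ + 1^r)(ŷ_i)` is `e_r(ŷ_i) a_δ(ŷ_i)` (expand the
Vandermonde determinant in the variables `X, ŷ_i` along the row of `X`), and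
`a_δ(y) = ± ∏_{j ≠ i} (y_i - y_j) a_δ(ŷ_i)`. For `r < n` this ratio is `s_(n-r, 1^r)`; for
`r ≥ n` the first column repeats another one, so the term vanishes.
-/

open Finset

/-- The Schur function of the hook partition `(n-r, 1^r)` in `k` variables,
given by the bialternant formula: the ratio of the determinant
`det(y_i^{λ_j + k - 1 - j})` (with `λ = (n-r, 1, …, 1, 0, …, 0)`, indices
`j = 0, …, k-1`) by the Vandermonde determinant `det(y_i^{k - 1 - j})`. -/
noncomputable def hookSchur {K : Type*} [Field K] (k n r : ℕ) (y : Fin k → K) : K :=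
  Matrix.det (Matrix.of fun i j : Fin k =>
      y i ^ ((if (j : ℕ) = 0 then n - r else if (j : ℕ) ≤ r then 1 else 0) + (k - 1 - j))) /
    Matrix.det (Matrix.of fun i j : Fin k => y i ^ (k - 1 - (j : ℕ)))

open Matrix

lemma Fin.prod_erase_eq_prod_succAbove {M : Type*} [CommMonoid M] {m : ℕ}
    (f : Fin (m + 1) → M) (i : Fin (m + 1)) :
    ∏ j ∈ univ.erase i, f j = ∏ a, f (i.succAbove a) := by
  rw [← compl_singleton, ← Fin.image_succAbove_univ,
    prod_image Fin.succAbove_right_injective.injOn]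

section Alternant

variable {R : Type*} [CommRing R]

def alternant {p : ℕ} (z : Fin p → R) (e : Fin p → ℕ) : R :=
  det (of fun a b => z a ^ e b)

def staircase (p : ℕ) : Fin p → ℕ := fun b => p - 1 - b

/-- The exponents `δ + (1^r)` of the alternant of `s_(1^r) = e_r`. -/
def elementaryExponent (m r : ℕ) : Fin m → ℕ :=
  fun b => (if (b : ℕ) < r then 1 else 0) + (m - 1 - b)

lemma alternant_map {S : Type*} [CommRing S] (f : R →+* S) {p : ℕ} (z : Fin p → R)
    (e : Fin p → ℕ) : alternant (fun a => f (z a)) e = f (alternant z e) := by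
  simp only [alternant, RingHom.map_det, RingHom.mapMatrix_apply]
  congr 1
  ext a b
  simp

lemma alternant_comp_perm {p : ℕ} (z : Fin p → R) (e : Fin p → ℕ)
    (σ : Equiv.Perm (Fin p)) :
    alternant (z ∘ σ) e = Equiv.Perm.sign σ * alternant z e :=
  det_permute σ (of fun a b => z a ^ e b)

lemma alternant_eq_zero_of_exponent_eq {p : ℕ} (z : Fin p → R) {e : Fin p → ℕ} {i j : Fin p}
    (hij : i ≠ j) (he : e i = e j) : alternant z e = 0 :=
  det_zero_of_column_eq hij fun a => by simp [he]

lemma alternant_cons_eq_sum {m : ℕ} (t : R) (z : Fin m → R) (e : Fin (m + 1) → ℕ) :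
    alternant (Fin.cons t z) e =
      ∑ j : Fin (m + 1), (-1) ^ (j : ℕ) * t ^ e j * alternant z (e ∘ j.succAbove) := by
  simp [alternant, det_succ_row_zero (of _), submatrix]

lemma alternant_cons_exponent_eq_sum {m : ℕ} (y : Fin (m + 1) → R) (N : ℕ)
    (e : Fin m → ℕ) :
    alternant y (Fin.cons N e) =
      ∑ i : Fin (m + 1), (-1) ^ (i : ℕ) * y i ^ N * alternant (y ∘ i.succAbove) e := by
  simp [alternant, det_succ_column_zero (of _), submatrix]

lemma alternant_staircase {p : ℕ} (z : Fin p → R) :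
    alternant z (staircase p) = ∏ a, ∏ b ∈ Ioi a, (z a - z b) := by
  have h := det_projVandermonde 1 z
  simp only [Pi.one_apply, one_mul] at h
  rw [← h]
  show det _ = det _
  congr 1
  ext a b
  simp only [of_apply, projVandermonde_apply, Pi.one_apply, one_pow, one_mul, Fin.val_rev,
    staircase]
  congr 1
  omega

lemma alternant_cons_staircase {m : ℕ} (t : R) (z : Fin m → R) :
    alternant (Fin.cons t z) (staircase (m + 1)) =
      (∏ a, (t - z a)) * alternant z (staircase m) := by
  simp [alternant_staircase, Fin.prod_univ_succ, Fin.prod_Ioi_succ]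

lemma alternant_staircase_eq_succAbove {m : ℕ} (y : Fin (m + 1) → R) (i : Fin (m + 1)) :
    alternant y (staircase (m + 1)) =
      (-1) ^ (i : ℕ) * (∏ a, (y i - y (i.succAbove a))) *
        alternant (y ∘ i.succAbove) (staircase m) := by
  have hcons : y ∘ i.cycleRange.symm = Fin.cons (y i) (y ∘ i.succAbove) := by
    ext j
    cases j using Fin.cases <;> simp [Fin.cycleRange_symm_zero, Fin.cycleRange_symm_succ]
  have h := alternant_comp_perm y (staircase (m + 1)) i.cycleRange.symm
  rw [Equiv.Perm.sign_symm, Fin.sign_cycleRange, hcons, alternant_cons_staircase] at h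
  push_cast at h
  simp only [Function.comp_apply] at h
  have hsq : ((-1 : R) ^ (i : ℕ)) * (-1) ^ (i : ℕ) = 1 := by rw [← mul_pow]; simp
  linear_combination (-(-1 : R) ^ (i : ℕ)) * h - alternant y (staircase (m + 1)) * hsq

lemma staircase_comp_succAbove {m : ℕ} (j : Fin (m + 1)) :
    staircase (m + 1) ∘ j.succAbove = elementaryExponent m j := by
  ext b
  simp only [Function.comp_apply, staircase, elementaryExponent, Fin.succAbove, Fin.lt_def,
    Fin.val_castSucc]
  split_ifs <;> simp <;> omega

open Polynomial in
/-- Laplace expansion of the Vandermonde determinant in the variables `X, z` along the row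
of `X`. -/
lemma sum_alternant_elementaryExponent_mul_X_pow {m : ℕ} (z : Fin m → R) :
    ∑ j : Fin (m + 1), C ((-1) ^ (j : ℕ) * alternant z (elementaryExponent m j)) * X ^ (m - j) =
      (∏ a, (X - C (z a))) * C (alternant z (staircase m)) := by
  have h := alternant_cons_staircase (X : R[X]) (fun a => C (z a))
  rw [alternant_cons_eq_sum, alternant_map] at h
  rw [← h]
  refine sum_congr rfl fun j _ => ?_
  rw [staircase_comp_succAbove, alternant_map]
  simp [staircase]

open Polynomial in
lemma alternant_elementaryExponent {m r : ℕ} (z : Fin m → R) (hr : r ≤ m) :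
    alternant z (elementaryExponent m r) =
      (univ.val.map z).esymm r * alternant z (staircase m) := by
  have h := congrArg (coeff · (m - r)) (sum_alternant_elementaryExponent_mul_X_pow z)
  simp only [finsetSum_coeff, coeff_C_mul_X_pow, coeff_mul_C] at h
  have hcard : Multiset.card (univ.val.map z) = m := by simp
  have hcoeff : (∏ a, (X - C (z a))).coeff (m - r) = (-1) ^ r * (univ.val.map z).esymm r := by
    rw [prod_eq_multiset_prod, ← Function.comp_def (fun t => X - C t) z,
      ← Multiset.map_map, Multiset.prod_X_sub_C_coeff _ (by omega), hcard, Nat.sub_sub_self hr]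
  rw [sum_eq_single (⟨r, by omega⟩ : Fin (m + 1)), hcoeff, if_pos rfl] at h
  · rw [mul_assoc] at h
    exact (isUnit_neg_one.pow r).mul_left_cancel h
  · intro j _ hj
    rw [if_neg]
    contrapose! hj
    ext
    simp only
    omega
  · simp

/-- For `n ≤ r` the first column, of exponent `n + m - r`, repeats column `r - n + 1`. -/
lemma alternant_cons_elementaryExponent_eq_zero {m n r : ℕ} (y : Fin (m + 1) → R)
    (hn : 1 ≤ n) (hnr : n ≤ r) (hrm : r ≤ m) :
    alternant y (Fin.cons (n + m - r) (elementaryExponent m r)) = 0 :=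
  alternant_eq_zero_of_exponent_eq y (j := (⟨r - n, by omega⟩ : Fin m).succ)
    (Fin.succ_ne_zero _).symm (by
      rw [Fin.cons_zero, Fin.cons_succ, elementaryExponent, if_pos (by simp only; omega)]
      simp only
      omega)

open Polynomial in
lemma prod_sub_mul_eq_sum_esymm {m : ℕ} (z : Fin m → R) (x q : R) :
    ∏ a, (x - q * z a) =
      ∑ r ∈ range (m + 1), (-q) ^ r * (univ.val.map z).esymm r * x ^ (m - r) := by
  have h := congrArg (eval x)
    (Multiset.prod_X_add_C_eq_sum_esymm ((univ.val.map z).map ((-q) • ·)))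
  simp only [← Multiset.pow_smul_esymm] at h
  simp only [eval_multiset_prod, Multiset.map_map, Function.comp_def, eval_add, eval_X, eval_C,
    eval_finsetSum, eval_mul, eval_pow, Multiset.card_map, card_val, card_univ, Fintype.card_fin,
    smul_eq_mul, neg_mul, ← sub_eq_add_neg] at h
  rwa [prod_eq_multiset_prod]

end Alternant

section Field

variable {K : Type*} [Field K]

lemma alternant_staircase_ne_zero {p : ℕ} {y : Fin p → K} (hy : Function.Injective y) :
    alternant y (staircase p) ≠ 0 := by
  rw [alternant_staircase]
  exact prod_ne_zero_iff.mpr fun a _ => prod_ne_zero_iff.mpr fun b hb =>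
    sub_ne_zero.mpr (hy.ne (mem_Ioi.mp hb).ne)

lemma alternant_cons_elementaryExponent_div {m r : ℕ} (N : ℕ) {y : Fin (m + 1) → K}
    (hy : Function.Injective y) (hr : r ≤ m) :
    alternant y (Fin.cons N (elementaryExponent m r)) / alternant y (staircase (m + 1)) =
      ∑ i, y i ^ N * (univ.val.map (y ∘ i.succAbove)).esymm r /
        ∏ a, (y i - y (i.succAbove a)) := by
  rw [alternant_cons_exponent_eq_sum, sum_div]
  refine sum_congr rfl fun i _ => ?_
  have hD := alternant_staircase_ne_zero hy
  rw [alternant_staircase_eq_succAbove y i] at hD ⊢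
  rw [alternant_elementaryExponent _ hr,
    div_eq_div_iff hD (right_ne_zero_of_mul (left_ne_zero_of_mul hD))]
  ring

lemma hookSchur_eq_div {m n r : ℕ} (y : Fin (m + 1) → K) (hr : r < n) :
    hookSchur (m + 1) n r y =
      alternant y (Fin.cons (n + m - r) (elementaryExponent m r)) /
        alternant y (staircase (m + 1)) := by
  unfold hookSchur alternant staircase
  congr 3
  ext i j
  cases j using Fin.cases with
  | zero => simp only [Fin.val_zero, if_true, Fin.cons_zero]; congr 1; omega
  | succ j => simp [elementaryExponent]; congr 2; omega

lemma pow_mul_prod_div_eq_sum_esymm {m : ℕ} (n : ℕ) (x q : K) (z : Fin m → K) :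
    x ^ n * ∏ a, (x - q * z a) / (x - z a) =
      ∑ r ∈ range (m + 1),
        (-q) ^ r * (x ^ (n + m - r) * (univ.val.map z).esymm r / ∏ a, (x - z a)) := by
  rw [prod_div_distrib, prod_sub_mul_eq_sum_esymm, mul_div_assoc', mul_sum, sum_div]
  refine sum_congr rfl fun r hr => ?_
  rw [show n + m - r = n + (m - r) by have := mem_range.mp hr; omega, pow_add]
  ring

end Field

/-- The one-row Hall–Littlewood polynomial
`P_{(n)}(y; q) = Σ_i y_i^n ∏_{j≠i} (y_i - q y_j)/(y_i - y_j)` equals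
`Σ_{r=0}^{n-1} (-q)^r s_{(n-r,1^r)}(y)` in `k ≥ n` variables. -/
theorem stmt8 (K : Type*) [Field K] (k n : ℕ) (hn : 1 ≤ n) (hnk : n ≤ k)
    (y : Fin k → K) (hy : Function.Injective y) (q : K) :
    ∑ i, y i ^ n * ∏ j ∈ Finset.univ.erase i, (y i - q * y j) / (y i - y j) =
      ∑ r ∈ Finset.range n, (-q) ^ r * hookSchur k n r y := by
  obtain ⟨m, rfl⟩ : ∃ m, k = m + 1 := ⟨k - 1, by omega⟩
  calc ∑ i, y i ^ n * ∏ j ∈ univ.erase i, (y i - q * y j) / (y i - y j)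
      = ∑ r ∈ range (m + 1), (-q) ^ r * ∑ i, y i ^ (n + m - r) *
          (univ.val.map (y ∘ i.succAbove)).esymm r / ∏ a, (y i - y (i.succAbove a)) := by
        simp_rw [mul_sum]
        rw [sum_comm]
        refine sum_congr rfl fun i _ => ?_
        rw [Fin.prod_erase_eq_prod_succAbove (fun j => (y i - q * y j) / (y i - y j))]
        exact pow_mul_prod_div_eq_sum_esymm n (y i) q (y ∘ i.succAbove)
    _ = ∑ r ∈ range (m + 1), (-q) ^ r *
          (alternant y (Fin.cons (n + m - r) (elementaryExponent m r)) /
            alternant y (staircase (m + 1))) := by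
        refine sum_congr rfl fun r hr => ?_
        rw [alternant_cons_elementaryExponent_div _ hy (by have := mem_range.mp hr; omega)]
    _ = ∑ r ∈ range n, (-q) ^ r * hookSchur (m + 1) n r y := by
        rw [← sum_subset (range_subset_range.mpr hnk)]
        · exact sum_congr rfl fun r hr => by rw [hookSchur_eq_div y (mem_range.mp hr)]
        · intro r hr hrn
          rw [alternant_cons_elementaryExponent_eq_zero y hn (by simpa using hrn)
            (by have := mem_range.mp hr; omega), zero_div, mul_zero]
end

section
/- In ℚ(q)[[t]], define H(t) = Σ_{r≥0} h_r t^r to be any power series with h_0 = 1 and define E(t) by E(t) = (1-q)H(t)/(H(qt) - qH(t)). Then E(t) is a well-defined power series with constant term 1, and writing E(t) = 1 + Σ_{n≥1} E_n t^n, the coefficients satisfy the Procesi-type recursion E_{n+1} = h_{n+1} Σ_{i=0}^n q^i + Σ_{i=0}^{n-2} h_{n-i} E_{i+1} (Σ_{k=1}^{n-i-1} q^k) for all n ≥ 1, together with E_1 = h_1. -/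
open Finset PowerSeries

local notation "K" => RatFunc ℚ
local notation "q" => (RatFunc.X : RatFunc ℚ)

/-!
Write `D(t) = H(qt) - qH(t)`, whose coefficients are `D_j = (q^j - q) h_j`; so `D_0 = 1 - q`,
`D_1 = 0` and `D_j = -(1 - q)(q + ⋯ + q^{j-1})` for `j ≥ 2`. Comparing coefficients of `t^N`
in `E · D = (1 - q) H` and dividing by `1 - q` gives `E_0 = 1`, `E_1 = h_1`, and, for
`N = n + 1`, the recursion: the term `E_0 D_{n+1}` combines with `(1 - q) h_{n+1}` to
`(1 - q^{n+1}) h_{n+1}`, `E_n D_1` vanishes, and the terms `E_{i+1} D_{n-i}` with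
`0 ≤ i ≤ n - 2` give the sum.
-/

theorem RatFunc.X_ne_one {F : Type*} [Field F] : (RatFunc.X : RatFunc F) ≠ 1 := by
  intro h
  have hdeg : RatFunc.intDegree (RatFunc.X : RatFunc F) = 1 := RatFunc.intDegree_X
  rw [h] at hdeg
  simp at hdeg

theorem sum_Icc_one_pow_mul_one_sub {R : Type*} [CommRing R] (a : R) (r : ℕ) :
    (∑ k ∈ Icc 1 r, a ^ k) * (1 - a) = a - a ^ (r + 1) := by
  rw [← Ico_add_one_right_eq_Icc, geom_sum_Ico_mul_neg a (by omega), pow_one]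

namespace PowerSeries

theorem coeff_rescale_sub_C_mul_self {R : Type*} [CommRing R] (a : R) (H : R⟦X⟧) (j : ℕ) :
    coeff j (rescale a H - C a * H) = (a ^ j - a) * coeff j H := by
  simp [coeff_rescale, sub_mul]

section Procesi

variable {k : Type*} [Field k] {a : k} {H E : k⟦X⟧}

theorem sum_range_coeff_mul_eq_of_mul_rescale_sub_C_mul
    (hE : E * (rescale a H - C a * H) = C (1 - a) * H) (N : ℕ) :
    ∑ i ∈ range (N + 1), coeff i E * ((a ^ (N - i) - a) * coeff (N - i) H) =
      (1 - a) * coeff N H := by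
  have hN := congrArg (coeff N) hE
  rw [coeff_mul, Nat.sum_antidiagonal_eq_sum_range_succ_mk, coeff_C_mul] at hN
  simpa only [coeff_rescale_sub_C_mul_self] using hN

theorem constantCoeff_eq_one_of_mul_rescale_sub_C_mul (ha : a ≠ 1) (hH : constantCoeff H = 1)
    (hE : E * (rescale a H - C a * H) = C (1 - a) * H) :
    constantCoeff E = 1 := by
  have h0 := sum_range_coeff_mul_eq_of_mul_rescale_sub_C_mul hE 0
  simp only [zero_add, range_one, sum_singleton, Nat.sub_self, pow_zero,
    coeff_zero_eq_constantCoeff_apply, hH] at h0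
  exact mul_right_cancel₀ (sub_ne_zero.2 ha.symm) (by linear_combination h0)

theorem coeff_one_eq_of_mul_rescale_sub_C_mul (ha : a ≠ 1) (hH : constantCoeff H = 1)
    (hE : E * (rescale a H - C a * H) = C (1 - a) * H) :
    coeff 1 E = coeff 1 H := by
  have h1 := sum_range_coeff_mul_eq_of_mul_rescale_sub_C_mul hE 1
  simp only [sum_range_succ, range_zero, sum_empty, Nat.sub_self, Nat.sub_zero, pow_zero, pow_one,
    coeff_zero_eq_constantCoeff_apply, hH,
    constantCoeff_eq_one_of_mul_rescale_sub_C_mul ha hH hE] at h1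
  exact mul_right_cancel₀ (sub_ne_zero.2 ha.symm) (by linear_combination h1)

theorem coeff_succ_eq_of_mul_rescale_sub_C_mul (ha : a ≠ 1) (hH : constantCoeff H = 1)
    (hE : E * (rescale a H - C a * H) = C (1 - a) * H) {n : ℕ} (hn : 1 ≤ n) :
    coeff (n + 1) E = coeff (n + 1) H * ∑ i ∈ range (n + 1), a ^ i +
      ∑ i ∈ range (n - 1),
        coeff (n - i) H * coeff (i + 1) E * ∑ j ∈ Icc 1 (n - i - 1), a ^ j := by
  obtain ⟨m, rfl⟩ := Nat.exists_eq_add_of_le' hn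
  have key := sum_range_coeff_mul_eq_of_mul_rescale_sub_C_mul hE (m + 1 + 1)
  rw [sum_range_succ, sum_range_succ, sum_range_succ'] at key
  have hsum : (∑ i ∈ range (m + 1 - 1), coeff (m + 1 - i) H * coeff (i + 1) E *
        ∑ j ∈ Icc 1 (m + 1 - i - 1), a ^ j) * (1 - a) =
      -∑ i ∈ range m, coeff (i + 1) E *
        ((a ^ (m + 1 + 1 - (i + 1)) - a) * coeff (m + 1 + 1 - (i + 1)) H) := by
    rw [Nat.add_sub_cancel, sum_mul, ← sum_neg_distrib]
    refine sum_congr rfl fun i hi => ?_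
    have hi : i < m := mem_range.1 hi
    rw [show m + 1 + 1 - (i + 1) = m - i + 1 by omega, show m + 1 - i = m - i + 1 by omega,
      Nat.add_sub_cancel, mul_assoc, sum_Icc_one_pow_mul_one_sub]
    ring
  simp only [show m + 1 + 1 - (m + 1) = 1 by omega, Nat.sub_self, Nat.sub_zero, pow_zero, pow_one,
    sub_self, zero_mul, mul_zero, add_zero, coeff_zero_eq_constantCoeff_apply, hH,
    constantCoeff_eq_one_of_mul_rescale_sub_C_mul ha hH hE] at key
  apply mul_right_cancel₀ (sub_ne_zero.2 ha.symm)
  rw [add_mul, mul_assoc, geom_sum_mul_neg, hsum]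
  linear_combination key

end Procesi

end PowerSeries

/-- Let `H(t) = Σ_{r≥0} h_r t^r ∈ ℚ(q)[[t]]` with `h_0 = 1` and let `E(t)` satisfy
`E(t) · (H(qt) - q H(t)) = (1-q) H(t)` (defining `E = (1-q)H(t)/(H(qt) - qH(t))`,
which makes sense since `H(qt) - qH(t)` has constant term `1 - q ≠ 0`).
Then `E` has constant term `1`, `E_1 = h_1`, and the coefficients `E_n` of `E`
satisfy Procesi's recursion
`E_{n+1} = h_{n+1} Σ_{i=0}^n q^i + Σ_{i=0}^{n-2} h_{n-i} E_{i+1} (Σ_{k=1}^{n-i-1} q^k)`. -/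
theorem stmt11 (h : ℕ → K) (h0 : h 0 = 1) (E : PowerSeries K)
    (hE : E * (PowerSeries.rescale q (PowerSeries.mk h) -
        PowerSeries.C q * PowerSeries.mk h) =
      PowerSeries.C (1 - q) * PowerSeries.mk h) :
    PowerSeries.constantCoeff E = 1 ∧
    PowerSeries.coeff 1 E = h 1 ∧
    ∀ n : ℕ, 1 ≤ n →
      PowerSeries.coeff (n + 1) E =
        h (n + 1) * (∑ i ∈ Finset.range (n + 1), q ^ i) +
          ∑ i ∈ Finset.range (n - 1), h (n - i) * PowerSeries.coeff (i + 1) E *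
            ∑ k ∈ Finset.Icc 1 (n - i - 1), q ^ k := by
  have hH : constantCoeff (mk h) = 1 := by rw [← coeff_zero_eq_constantCoeff_apply, coeff_mk, h0]
  refine ⟨constantCoeff_eq_one_of_mul_rescale_sub_C_mul RatFunc.X_ne_one hH hE, ?_, ?_⟩
  · simpa only [coeff_mk] using coeff_one_eq_of_mul_rescale_sub_C_mul RatFunc.X_ne_one hH hE
  · intro n hn
    simpa only [coeff_mk] using coeff_succ_eq_of_mul_rescale_sub_C_mul RatFunc.X_ne_one hH hE hn
end
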